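/- The map f_1 : [0,1] → [0,1] is continuous and has infinite topological entropy: h_top(f_1) = +∞. -/

import Mathlib

open Set MeasureTheory

/-- The piecewise-affine `b`-branched sawtooth map on `[0,1]`:
`g1 b x = b*x - k` on `[k/b,(k+1)/b]` for `k ∈ {0,…,b-1}` even, and
`g1 b x = (k+1) - b*x` there for `k` odd.  (For `x ∈ [0,1]`, the index
`k = min ⌊b*x⌋ (b-1)` is exactly the branch index; at common endpoints of two
branches both formulas agree, so this agrees with the piecewise definition.) -/
noncomputable def g1 (b : ℕ) (x : ℝ) : ℝ :=
  let k : ℤ := min ⌊(b : ℝ) * x⌋ ((b : ℤ) - 1)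
  if Even k then (b : ℝ) * x - (k : ℝ) else ((k : ℝ) + 1) - (b : ℝ) * x

/-- For `x ∈ I_n = (2^{-n}, 2^{-n+1}]` (with `n ≥ 1`), `nIdx x = n`. -/
noncomputable def nIdx (x : ℝ) : ℕ := (⌊Real.logb 2 x⁻¹⌋ + 1).toNat

/-- The map `f_1 : [0,1] → [0,1]`: on each interval `I_n = (2^{-n}, 2^{-n+1}]` it is
`A_n⁻¹ ∘ g_{1,2n+1} ∘ A_n`, where `A_n x = 2^n x - 1`, and `f_1 0 = 0`. -/
noncomputable def f1 (x : ℝ) : ℝ :=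
  if x ≤ 0 then 0
  else (g1 (2 * nIdx x + 1) ((2 : ℝ) ^ nIdx x * x - 1) + 1) / (2 : ℝ) ^ nIdx x

/-- Triangle wave: continuous, period 2, `tri t = t` on `[0,1]`, `tri t = 2 - t` on `[1,2]`. -/
noncomputable def tri (t : ℝ) : ℝ := 1 - |1 - 2 * Int.fract (t / 2)|

lemma tri_continuous : Continuous tri := by
  have h : ContinuousOn (fun u : ℝ => 1 - |1 - 2 * u|) (Icc 0 1) := by fun_prop
  have h2 : (fun u : ℝ => 1 - |1 - 2 * u|) 0 = (fun u : ℝ => 1 - |1 - 2 * u|) 1 := by norm_num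
  have := (h.comp_fract'' h2).comp (continuous_id.div_const 2)
  exact this

lemma tri_mem_Icc (t : ℝ) : tri t ∈ Icc (0:ℝ) 1 := by
  have h1 := Int.fract_nonneg (t / 2)
  have h2 := Int.fract_lt_one (t / 2)
  constructor
  · rw [tri, sub_nonneg, abs_le]; constructor <;> nlinarith
  · rw [tri]; have := abs_nonneg (1 - 2 * Int.fract (t / 2)); linarith

lemma tri_eq_self {y : ℝ} (hy : y ∈ Icc (0:ℝ) 1) : tri y = y := by
  obtain ⟨h0, h1⟩ := hy
  have hf : Int.fract (y / 2) = y / 2 := Int.fract_eq_self.2 ⟨by linarith, by linarith⟩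
  rw [tri, hf, abs_of_nonneg (by linarith)]; ring

lemma tri_add_two_mul_int (t : ℝ) (k : ℤ) : tri (t + 2 * k) = tri t := by
  rw [tri, tri]
  have : (t + 2 * k) / 2 = t / 2 + k := by ring
  rw [this, Int.fract_add_intCast]

lemma tri_eq_two_sub {y : ℝ} (h1 : 1 ≤ y) (h2 : y ≤ 2) : tri y = 2 - y := by
  rcases eq_or_lt_of_le h2 with rfl | h2
  · norm_num [tri, Int.fract]
  · have hf : Int.fract (y / 2) = y / 2 := Int.fract_eq_self.2 ⟨by linarith, by linarith⟩
    rw [tri, hf, abs_of_nonpos (by linarith)]; ring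


lemma g1_eq_tri {b : ℕ} (hb : Odd b) {x : ℝ} (hx : x ∈ Icc (0:ℝ) 1) :
    g1 b x = tri ((b : ℝ) * x) := by
  obtain ⟨hx0, hx1⟩ := hx
  have hbpos : 0 < b := hb.pos
  have ht0 : (0:ℝ) ≤ (b:ℝ) * x := by positivity
  have htb : (b:ℝ) * x ≤ b := by
    have : (0:ℝ) < b := by exact_mod_cast hbpos
    nlinarith
  rcases eq_or_lt_of_le htb with heq | hlt
  · -- b * x = b
    obtain ⟨m, hm⟩ := hb
    have hfl : ⌊(b:ℝ) * x⌋ = (b : ℤ) := by rw [heq]; exact Int.floor_natCast b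
    have hk : min ⌊(b:ℝ) * x⌋ ((b : ℤ) - 1) = (b:ℤ) - 1 := by rw [hfl]; omega
    have hev : Even ((b:ℤ) - 1) := by subst hm; push_cast; exact ⟨m, by ring⟩
    rw [g1]; simp only [hk, if_pos hev]
    have : tri ((b:ℝ) * x) = tri 1 := by
      have : (b:ℝ) * x = 1 + 2 * (m : ℤ) := by rw [heq]; push_cast [hm]; ring
      rw [this, tri_add_two_mul_int]
    rw [this, tri_eq_self (by norm_num)]
    push_cast; linarith
  · -- b * x < b
    set t := (b:ℝ) * x with htdef
    have hfl_lt : ⌊t⌋ < (b:ℤ) := by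
      rw [Int.floor_lt]; push_cast; exact hlt
    have hk : min ⌊t⌋ ((b : ℤ) - 1) = ⌊t⌋ := by omega
    have hfl0 : 0 ≤ ⌊t⌋ := Int.floor_nonneg.2 ht0
    have hlo : (⌊t⌋ : ℝ) ≤ t := Int.floor_le t
    have hhi : t < ⌊t⌋ + 1 := Int.lt_floor_add_one t
    rw [g1]; simp only [← htdef, hk]
    rcases Int.even_or_odd ⌊t⌋ with ⟨j, hj⟩ | ⟨j, hj⟩
    · have hev : Even ⌊t⌋ := ⟨j, hj⟩
      rw [if_pos hev]
      have : tri t = tri (t - 2 * j + 2 * j) := by ring_nf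
      rw [this, tri_add_two_mul_int, tri_eq_self]
      · rw [hj]; push_cast; ring
      · have hfr : (⌊t⌋ : ℝ) = 2 * j := by rw [hj]; push_cast; ring
        rw [hfr] at hlo hhi
        constructor <;> [linarith; linarith]
    · have hodd : ¬ Even ⌊t⌋ := by rw [hj]; exact fun ⟨r, hr⟩ => by omega
      rw [if_neg hodd]
      have : tri t = tri (t - 2 * j + 2 * j) := by ring_nf
      rw [this, tri_add_two_mul_int, tri_eq_two_sub]
      · rw [hj]; push_cast; ring
      · have hfr : (⌊t⌋ : ℝ) = 2 * j + 1 := by rw [hj]; push_cast; ring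
        rw [hfr] at hlo; linarith
      · have hfr : (⌊t⌋ : ℝ) = 2 * j + 1 := by rw [hj]; push_cast; ring
        rw [hfr] at hhi; linarith


lemma nIdx_spec {x : ℝ} (hx0 : 0 < x) (hx1 : x ≤ 1) :
    1 ≤ nIdx x ∧ ((2:ℝ) ^ nIdx x)⁻¹ < x ∧ x ≤ 2 * ((2:ℝ) ^ nIdx x)⁻¹ := by
  set L := Real.logb 2 x⁻¹ with hLdef
  have hinv1 : 1 ≤ x⁻¹ := one_le_inv_iff₀.2 ⟨hx0, hx1⟩
  have hL0 : 0 ≤ L := Real.logb_nonneg one_lt_two hinv1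
  have hfl0 : 0 ≤ ⌊L⌋ := Int.floor_nonneg.2 hL0
  have hxL : x⁻¹ = (2:ℝ) ^ L := (Real.rpow_logb two_pos (by norm_num) (inv_pos.2 hx0)).symm
  have hnz : (nIdx x : ℤ) = ⌊L⌋ + 1 := by rw [nIdx, ← hLdef]; omega
  have hn : ((nIdx x : ℕ) : ℝ) = (⌊L⌋ : ℝ) + 1 := by exact_mod_cast congrArg (Int.cast : ℤ → ℝ) hnz
  have hpow : ((2:ℝ) ^ nIdx x) = (2:ℝ) ^ ((nIdx x : ℕ) : ℝ) := (Real.rpow_natCast 2 _).symm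
  have h1 : x⁻¹ < (2:ℝ) ^ nIdx x := by
    rw [hxL, hpow]
    apply Real.rpow_lt_rpow_left_iff (x := 2) one_lt_two |>.2
    rw [hn]; exact Int.lt_floor_add_one L
  have h2 : (2:ℝ) ^ ((⌊L⌋ : ℝ)) ≤ x⁻¹ := by
    rw [hxL]
    exact Real.rpow_le_rpow_left_iff (x := 2) one_lt_two |>.2 (Int.floor_le L)
  refine ⟨by omega, ?_, ?_⟩
  · exact (inv_lt_comm₀ (by positivity) hx0).2 h1
  · have hsplit : ((2:ℝ) ^ nIdx x) = 2 * (2:ℝ) ^ ((⌊L⌋:ℝ)) := by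
      rw [hpow, hn, Real.rpow_add two_pos, Real.rpow_one, mul_comm]
    have hpos : (0:ℝ) < (2:ℝ) ^ ((⌊L⌋:ℝ)) := Real.rpow_pos_of_pos two_pos _
    rw [hsplit, mul_inv, ← mul_assoc, mul_inv_cancel₀ (two_ne_zero), one_mul]
    calc x = (x⁻¹)⁻¹ := (inv_inv x).symm
    _ ≤ ((2:ℝ) ^ ((⌊L⌋:ℝ)))⁻¹ := inv_anti₀ hpos h2

lemma two_le_pow_real {N : ℕ} (hN : 1 ≤ N) : (2:ℝ) ≤ 2 ^ N := by
  calc (2:ℝ) = 2 ^ 1 := (pow_one 2).symm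
  _ ≤ 2 ^ N := pow_le_pow_right₀ one_le_two hN

lemma nIdx_eq {N : ℕ} (hN : 1 ≤ N) {x : ℝ}
    (h1 : ((2:ℝ)^N)⁻¹ < x) (h2 : x ≤ 2 * ((2:ℝ)^N)⁻¹) : nIdx x = N := by
  have hvN : (0:ℝ) < 2^N := by positivity
  have hx0 : (0:ℝ) < x := lt_trans (by positivity) h1
  have hx1 : x ≤ 1 := by
    refine h2.trans ?_
    rw [mul_inv_le_iff₀ hvN, one_mul]
    exact two_le_pow_real hN
  obtain ⟨hM1, hM2, hM3⟩ := nIdx_spec hx0 hx1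
  set M := nIdx x with hM
  have hvM : (0:ℝ) < 2^M := by positivity
  have key : ∀ (A B : ℕ), (0:ℝ) < 2^A → (0:ℝ) < 2^B →
      ((2:ℝ)^A)⁻¹ < x → x ≤ 2 * ((2:ℝ)^B)⁻¹ → B ≤ A := by
    intro A B hA hB hA2 hB2
    have h := lt_of_lt_of_le hA2 hB2
    rw [inv_lt_iff_one_lt_mul₀ hA] at h
    have h' := mul_lt_mul_of_pos_right h hB
    rw [one_mul] at h'
    have hreal : (2:ℝ)^B < 2 * 2^A := by
      calc (2:ℝ)^B < 2 * (2^B)⁻¹ * 2^A * 2^B := h'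
      _ = 2 * 2^A * ((2^B)⁻¹ * 2^B) := by ring
      _ = 2 * 2^A := by rw [inv_mul_cancel₀ hB.ne', mul_one]
    have hnat : (2:ℕ)^B < 2 * 2^A := by exact_mod_cast hreal
    have : (2:ℕ)^B < 2^(A+1) := by rw [pow_succ]; omega
    have := (Nat.pow_lt_pow_iff_right one_lt_two).1 this
    omega
  have c1 := key M N hvM hvN hM2 h2
  have c2 := key N M hvN hvM h1 hM3
  omega


lemma f1_eq_on {N : ℕ} (hN : 1 ≤ N) {x : ℝ}
    (h1 : ((2:ℝ)^N)⁻¹ < x) (h2 : x ≤ 2 * ((2:ℝ)^N)⁻¹) :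
    f1 x = (g1 (2 * N + 1) ((2 : ℝ) ^ N * x - 1) + 1) / (2 : ℝ) ^ N := by
  have hx0 : (0:ℝ) < x := lt_trans (by positivity) h1
  rw [f1, if_neg (not_le.2 hx0), nIdx_eq hN h1 h2]

lemma arg_mem {N : ℕ} {x : ℝ}
    (h1 : ((2:ℝ)^N)⁻¹ < x) (h2 : x ≤ 2 * ((2:ℝ)^N)⁻¹) :
    (2 : ℝ) ^ N * x - 1 ∈ Icc (0:ℝ) 1 := by
  have hvN : (0:ℝ) < 2^N := by positivity
  constructor
  · have : (1:ℝ) < 2^N * x := by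
      rw [← inv_lt_iff_one_lt_mul₀' hvN]; exact h1
    linarith
  · have : (2:ℝ)^N * x ≤ 2 := by
      calc (2:ℝ)^N * x ≤ 2^N * (2 * (2^N)⁻¹) := by gcongr
      _ = 2 * (2^N * (2^N)⁻¹) := by ring
      _ = 2 := by rw [mul_inv_cancel₀ hvN.ne', mul_one]
    linarith

lemma f1_mem {N : ℕ} (hN : 1 ≤ N) {x : ℝ}
    (h1 : ((2:ℝ)^N)⁻¹ < x) (h2 : x ≤ 2 * ((2:ℝ)^N)⁻¹) :
    f1 x ∈ Icc (((2:ℝ)^N)⁻¹) (2 * ((2:ℝ)^N)⁻¹) := by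
  have hvN : (0:ℝ) < 2^N := by positivity
  rw [f1_eq_on hN h1 h2, g1_eq_tri (by exact ⟨N, by ring⟩) (arg_mem h1 h2)]
  obtain ⟨ht0, ht1⟩ := tri_mem_Icc ((2 * N + 1 : ℕ) * ((2:ℝ)^N * x - 1))
  constructor
  · rw [inv_le_iff_one_le_mul₀ hvN, div_mul_cancel₀ _ hvN.ne']
    linarith
  · rw [div_le_iff₀ hvN, mul_assoc, mul_comm ((2:ℝ)^N)⁻¹,
      mul_inv_cancel₀ hvN.ne', mul_one]
    linarith

lemma f1_mapsTo : Set.MapsTo f1 (Icc (0:ℝ) 1) (Icc (0:ℝ) 1) := by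
  intro x hx
  rcases le_or_gt x 0 with h | h
  · rw [f1, if_pos h]; exact ⟨le_refl 0, zero_le_one⟩
  · obtain ⟨hN, h1, h2⟩ := nIdx_spec h hx.2
    obtain ⟨m1, m2⟩ := f1_mem hN h1 h2
    have hvN : (0:ℝ) < 2^(nIdx x) := by positivity
    constructor
    · exact le_trans (by positivity) m1
    · refine m2.trans ?_
      rw [mul_inv_le_iff₀ hvN, one_mul]
      exact two_le_pow_real hN

noncomputable def FN (N : ℕ) (y : ℝ) : ℝ :=
  (tri ((2 * N + 1 : ℕ) * ((2:ℝ)^N * y - 1)) + 1) / (2:ℝ)^N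

lemma FN_continuous (N : ℕ) : Continuous (FN N) := by
  apply Continuous.div_const
  exact (tri_continuous.comp (by fun_prop)).add continuous_const

lemma f1_eq_FN {N : ℕ} (hN : 1 ≤ N) {x : ℝ}
    (h1 : ((2:ℝ)^N)⁻¹ < x) (h2 : x ≤ 2 * ((2:ℝ)^N)⁻¹) : f1 x = FN N x := by
  rw [f1_eq_on hN h1 h2, FN, g1_eq_tri ⟨N, by ring⟩ (arg_mem h1 h2)]

lemma tri_odd (k : ℕ) : tri (2 * k + 1) = 1 := by
  have : ((2:ℝ) * k + 1) = 1 + 2 * (k : ℤ) := by push_cast; ring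
  rw [this, tri_add_two_mul_int, tri_eq_self (by norm_num)]

lemma tri_zero : tri 0 = 0 := tri_eq_self (by norm_num)

lemma FN_left {M : ℕ} : FN M (((2:ℝ)^M)⁻¹) = ((2:ℝ)^M)⁻¹ := by
  have hv : (0:ℝ) < 2^M := by positivity
  rw [FN, mul_inv_cancel₀ hv.ne', sub_self, mul_zero, tri_zero, zero_add, one_div]

lemma FN_right {M : ℕ} : FN M (2 * ((2:ℝ)^M)⁻¹) = 2 * ((2:ℝ)^M)⁻¹ := by
  have hv : (0:ℝ) < 2^M := by positivity
  have harg : (2:ℝ)^M * (2 * ((2:ℝ)^M)⁻¹) - 1 = 1 := by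
    field_simp; norm_num
  rw [FN, harg]
  have : ((2 * M + 1 : ℕ) : ℝ) * 1 = 2 * (M:ℝ) + 1 := by push_cast; ring
  rw [this, tri_odd M, div_eq_mul_inv]
  norm_num

lemma f1_eq_FN_on_Icc {M : ℕ} (hM : 1 ≤ M) {y : ℝ}
    (h1 : ((2:ℝ)^M)⁻¹ ≤ y) (h2 : y ≤ 2 * ((2:ℝ)^M)⁻¹) : f1 y = FN M y := by
  rcases eq_or_lt_of_le h1 with rfl | h1'
  · have hv : (0:ℝ) < 2^M := by positivity
    have hv' : (0:ℝ) < 2^(M+1) := by positivity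
    have e1 : ((2:ℝ)^(M+1))⁻¹ < ((2:ℝ)^M)⁻¹ := by
      apply inv_strictAnti₀ hv
      rw [pow_succ]; nlinarith
    have e2 : ((2:ℝ)^M)⁻¹ = 2 * ((2:ℝ)^(M+1))⁻¹ := by
      rw [pow_succ]; field_simp
    rw [f1_eq_FN (Nat.le_add_left 1 M) e1 (le_of_eq e2)]
    have r1 : FN (M+1) (((2:ℝ)^M)⁻¹) = ((2:ℝ)^M)⁻¹ := by rw [e2]; exact FN_right
    rw [r1, FN_left]
  · exact f1_eq_FN hM h1' h2

lemma f1_zero : f1 0 = 0 := by rw [f1, if_pos le_rfl]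

lemma f1_continuousOn : ContinuousOn f1 (Icc (0:ℝ) 1) := by
  intro x hx
  rcases eq_or_lt_of_le hx.1 with rfl | hx0
  · -- continuity at 0 by squeeze
    have hbound : ∀ y ∈ Icc (0:ℝ) 1, f1 y ∈ Icc (0:ℝ) (2 * y) := by
      intro y hy
      rcases eq_or_lt_of_le hy.1 with rfl | hy0
      · rw [f1_zero]; norm_num
      · obtain ⟨hN, h1, h2⟩ := nIdx_spec hy0 hy.2
        obtain ⟨m1, m2⟩ := f1_mem hN h1 h2
        exact ⟨le_trans (by positivity) m1, m2.trans (by linarith)⟩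
    rw [ContinuousWithinAt, f1_zero]
    apply tendsto_of_tendsto_of_tendsto_of_le_of_le'
      (tendsto_const_nhds) ?_ ?_ ?_
    · exact fun y => 2 * y
    · have : Filter.Tendsto (fun y : ℝ => 2 * y) (nhdsWithin 0 (Icc (0:ℝ) 1)) (nhds (2 * 0)) :=
        ((continuous_const.mul continuous_id).tendsto 0).mono_left nhdsWithin_le_nhds
      simpa using this
    · exact eventually_nhdsWithin_of_forall (fun y hy => (hbound y hy).1)
    · exact eventually_nhdsWithin_of_forall (fun y hy => (hbound y hy).2)
  · -- x ∈ (0,1]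
    obtain ⟨hN, h1, h2⟩ := nIdx_spec hx0 hx.2
    set N := nIdx x with hNdef
    rcases eq_or_lt_of_le h2 with hxr | hxint
    · -- x is the right endpoint 2 * 2⁻ᴺ
      rcases eq_or_lt_of_le hN with hN1 | hN2
      · -- N = 1, x = 1
        apply ContinuousWithinAt.congr_of_eventuallyEq
          ((FN_continuous N).continuousWithinAt)
        · have hmem : Ioi ((2:ℝ)^N)⁻¹ ∈ nhdsWithin x (Icc (0:ℝ) 1) :=
            mem_nhdsWithin_of_mem_nhds (isOpen_Ioi.mem_nhds h1)
          filter_upwards [hmem, self_mem_nhdsWithin] with y hy1 hy2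
          apply f1_eq_FN hN hy1
          have : x = 1 := by
            rw [hxr, ← hN1]; norm_num
          calc y ≤ 1 := hy2.2
          _ = x := this.symm
          _ ≤ 2 * ((2:ℝ)^N)⁻¹ := le_of_eq hxr
        · exact f1_eq_FN hN h1 h2
      · -- N ≥ 2 : two-sided gluing
        set M := N - 1 with hMdef
        have hM1 : 1 ≤ M := by omega
        have hMN : M + 1 = N := by omega
        have e2 : ((2:ℝ)^M)⁻¹ = 2 * ((2:ℝ)^N)⁻¹ := by
          rw [← hMN, pow_succ]; field_simp
        have hxM : x = ((2:ℝ)^M)⁻¹ := by rw [e2, hxr]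
        apply ContinuousWithinAt.mono (t := (Icc (0:ℝ) 1 ∩ Iic x) ∪ (Icc (0:ℝ) 1 ∩ Ici x))
        · apply ContinuousWithinAt.union
          · -- left side : agrees with FN N
            apply ContinuousWithinAt.congr_of_eventuallyEq
              ((FN_continuous N).continuousWithinAt)
            · have hmem : Ioi ((2:ℝ)^N)⁻¹ ∈ nhdsWithin x (Icc (0:ℝ) 1 ∩ Iic x) :=
                mem_nhdsWithin_of_mem_nhds (isOpen_Ioi.mem_nhds h1)
              filter_upwards [hmem, self_mem_nhdsWithin] with y hy1 hy2
              exact f1_eq_FN hN hy1 (hy2.2.trans (le_of_eq hxr))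
            · exact f1_eq_FN hN h1 h2
          · -- right side : agrees with FN M
            apply ContinuousWithinAt.congr_of_eventuallyEq
              ((FN_continuous M).continuousWithinAt)
            · have hlt : x < 2 * ((2:ℝ)^M)⁻¹ := by
                rw [hxM]
                have hv : (0:ℝ) < (2^M)⁻¹ := by positivity
                linarith
              have hmem : Iio (2 * ((2:ℝ)^M)⁻¹) ∈ nhdsWithin x (Icc (0:ℝ) 1 ∩ Ici x) :=
                mem_nhdsWithin_of_mem_nhds (isOpen_Iio.mem_nhds hlt)
              filter_upwards [hmem, self_mem_nhdsWithin] with y hy1 hy2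
              exact f1_eq_FN_on_Icc hM1 (hxM ▸ hy2.2) (le_of_lt hy1)
            · exact f1_eq_FN_on_Icc hM1 (le_of_eq hxM.symm) (by rw [hxM]; nlinarith [inv_pos.2 (pow_pos (two_pos (α := ℝ)) M)])
        · intro y hy
          rcases le_total y x with h | h
          · exact Or.inl ⟨hy, h⟩
          · exact Or.inr ⟨hy, h⟩
    · -- x in the open interval
      apply ContinuousWithinAt.congr_of_eventuallyEq
        ((FN_continuous N).continuousWithinAt)
      · have hmem : Ioo (((2:ℝ)^N)⁻¹) (2 * ((2:ℝ)^N)⁻¹) ∈ nhdsWithin x (Icc (0:ℝ) 1) :=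
          mem_nhdsWithin_of_mem_nhds (isOpen_Ioo.mem_nhds ⟨h1, hxint⟩)
        filter_upwards [hmem] with y hy
        exact f1_eq_FN hN hy.1 (le_of_lt hy.2)
      · exact f1_eq_FN hN h1 h2

/-! ### Separated orbits inside `I_N` -/

noncomputable def xw (N : ℕ) : List (Fin N) → ℝ
  | [] => 1
  | a :: l => (xw N l + 2 * ((a : ℕ) + 1)) / (2 * N + 1)

lemma xw_mem (N : ℕ) : ∀ l : List (Fin N), xw N l ∈ Ioc (0:ℝ) 1 := by
  intro l
  induction l with
  | nil => exact ⟨one_pos, le_refl 1⟩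
  | cons a l ih =>
    have hb : (0:ℝ) < 2 * N + 1 := by positivity
    have ha : ((a : ℕ) : ℝ) + 1 ≤ N := by
      have := a.isLt; exact_mod_cast Nat.succ_le_of_lt this
    constructor
    · rw [xw]
      apply div_pos _ hb
      have := ih.1; positivity
    · rw [xw, div_le_one hb]
      have := ih.2; linarith

lemma xw_cons_mem (N : ℕ) (a : Fin N) (l : List (Fin N)) :
    xw N (a :: l) ∈ Icc ((2 * ((a:ℕ) + 1) : ℝ)/(2 * N + 1)) ((2 * ((a:ℕ) + 1) + 1 : ℝ)/(2 * N + 1)) := by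
  have hb : (0:ℝ) < 2 * N + 1 := by positivity
  obtain ⟨h0, h1⟩ := xw_mem N l
  rw [xw]
  constructor
  · rw [div_le_div_iff₀ hb hb]; nlinarith
  · rw [div_le_div_iff₀ hb hb]; nlinarith

noncomputable def yw (N : ℕ) (l : List (Fin N)) : ℝ := (xw N l + 1) / 2 ^ N

lemma yw_mem {N : ℕ} (l : List (Fin N)) :
    ((2:ℝ)^N)⁻¹ < yw N l ∧ yw N l ≤ 2 * ((2:ℝ)^N)⁻¹ := by
  have hv : (0:ℝ) < 2^N := by positivity
  obtain ⟨h0, h1⟩ := xw_mem N l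
  constructor
  · rw [yw, lt_div_iff₀ hv, inv_mul_cancel₀ hv.ne']; linarith
  · rw [yw, div_le_iff₀ hv, mul_assoc, inv_mul_cancel₀ hv.ne', mul_one]; linarith

lemma f1_yw {N : ℕ} (hN : 1 ≤ N) (a : Fin N) (l : List (Fin N)) :
    f1 (yw N (a :: l)) = yw N l := by
  obtain ⟨hy1, hy2⟩ := yw_mem (N := N) (a :: l)
  have hv : (0:ℝ) < 2^N := by positivity
  rw [f1_eq_on hN hy1 hy2]
  have harg : (2:ℝ)^N * yw N (a :: l) - 1 = xw N (a :: l) := by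
    rw [yw]; field_simp; ring
  rw [harg, g1_eq_tri ⟨N, by ring⟩ ⟨(xw_mem N _).1.le, (xw_mem N _).2⟩]
  have hb : (0:ℝ) < 2 * N + 1 := by positivity
  have hmul : ((2 * N + 1 : ℕ) : ℝ) * xw N (a :: l) = xw N l + 2 * (((a:ℕ) + 1 : ℤ)) := by
    rw [xw]
    push_cast
    field_simp
  rw [hmul, tri_add_two_mul_int, tri_eq_self ⟨(xw_mem N l).1.le, (xw_mem N l).2⟩, yw]

lemma f1_iter_yw {N : ℕ} (hN : 1 ≤ N) :
    ∀ (k : ℕ) (l : List (Fin N)), k ≤ l.length → f1^[k] (yw N l) = yw N (l.drop k) := by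
  intro k
  induction k with
  | zero => intro l _; simp
  | succ k ih =>
    intro l hl
    match l with
    | [] => simp at hl
    | a :: t =>
      rw [Function.iterate_succ_apply, f1_yw hN a t, ih t (by simpa using Nat.lt_succ.1 (Nat.lt_of_lt_of_le (Nat.lt_succ_self k) hl))]
      simp

lemma yw_sep {N : ℕ} {a a' : Fin N} (ha : a ≠ a') (t t' : List (Fin N)) :
    (((2 * N + 1 : ℝ)) * 2^N)⁻¹ ≤ |yw N (a :: t) - yw N (a' :: t')| := by
  have hb : (0:ℝ) < 2 * N + 1 := by positivity
  have hv : (0:ℝ) < 2^N := by positivity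
  have key : ∀ (c c' : Fin N), (c:ℕ) < (c':ℕ) → ∀ s s' : List (Fin N),
      ((2 * N + 1 : ℝ))⁻¹ ≤ xw N (c' :: s') - xw N (c :: s) := by
    intro c c' hcc s s'
    have h1 := (xw_cons_mem N c s).2
    have h2 := (xw_cons_mem N c' s').1
    have hcast : (2 * ((c:ℕ) + 1) + 1 : ℝ) + 1 ≤ 2 * ((c':ℕ) + 1) := by
      have : (c:ℕ) + 1 ≤ (c':ℕ) := hcc
      have : ((c:ℕ) : ℝ) + 1 ≤ ((c':ℕ) : ℝ) := by exact_mod_cast this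
      linarith
    rw [inv_eq_one_div]
    calc (1:ℝ) / (2 * N + 1) = (2 * ((c:ℕ) + 1) + 1 + 1) / (2 * N + 1) - (2 * ((c:ℕ) + 1) + 1) / (2 * N + 1) := by ring
    _ ≤ (2 * ((c':ℕ) + 1)) / (2 * N + 1) - (2 * ((c:ℕ) + 1) + 1) / (2 * N + 1) := by
        gcongr
    _ ≤ xw N (c' :: s') - xw N (c :: s) := by gcongr
  have hyx : yw N (a :: t) - yw N (a' :: t') = (xw N (a :: t) - xw N (a' :: t')) / 2^N := by
    rw [yw, yw]; ring
  have habs : |yw N (a :: t) - yw N (a' :: t')| = |xw N (a :: t) - xw N (a' :: t')| / 2^N := by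
    rw [hyx, abs_div, abs_of_pos hv]
  rw [habs, mul_inv, le_div_iff₀ hv, mul_assoc, inv_mul_cancel₀ hv.ne', mul_one]
  have hne : (a:ℕ) ≠ (a':ℕ) := fun he => ha (Fin.ext he)
  rcases lt_or_gt_of_ne hne with h | h
  · rw [abs_sub_comm]
    exact (key a a' h t t').trans (le_abs_self _)
  · exact (key a' a h t' t).trans (le_abs_self _)

lemma exists_first_diff {α : Type*} : ∀ (l l' : List α), l.length = l'.length → l ≠ l' →
    ∃ k a t a' t', l.drop k = a :: t ∧ l'.drop k = a' :: t' ∧ a ≠ a' ∧ k < l.length := by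
  intro l
  induction l with
  | nil =>
    intro l' hlen hne
    match l' with
    | [] => exact absurd rfl hne
  | cons a t ih =>
    intro l' hlen hne
    match l' with
    | [] => simp at hlen
    | a' :: t' =>
      by_cases hh : a = a'
      · subst hh
        have ht : t ≠ t' := by rintro rfl; exact hne rfl
        obtain ⟨k, b, s, b', s', h1, h2, h3, h4⟩ := ih t' (by simpa using hlen) ht
        exact ⟨k+1, b, s, b', s', by simpa using h1, by simpa using h2, h3, by simp; omega⟩
      · exact ⟨0, a, t, a', t', rfl, rfl, hh, by simp⟩

open Dynamics UniformSpace in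
lemma net_card_le {N m : ℕ} (hN : 1 ≤ N) {δ : ℝ} (hδ : 0 < δ)
    (hδ2 : 2 * δ ≤ ((2 * N + 1 : ℝ) * 2^N)⁻¹) :
    ((N : ℕ∞)) ^ m ≤ netMaxcard f1 (Icc (0:ℝ) 1) {p : ℝ × ℝ | dist p.1 p.2 < δ} m := by
  set ε : ℝ := ((2 * N + 1 : ℝ) * 2^N)⁻¹ with hε
  have hεpos : 0 < ε := by positivity
  set U : Set (ℝ × ℝ) := {p : ℝ × ℝ | dist p.1 p.2 < δ} with hU
  set Φ : (Fin m → Fin N) → ℝ := fun w => yw N (List.ofFn w) with hΦ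
  have main : ∀ w w' : Fin m → Fin N, w ≠ w' → ∃ k < m,
      ε ≤ dist (f1^[k] (Φ w)) (f1^[k] (Φ w')) := by
    intro w w' hww
    have hne : List.ofFn w ≠ List.ofFn w' := fun h => hww (List.ofFn_injective h)
    obtain ⟨k, a, t, a', t', h1, h2, h3, h4⟩ :=
      exists_first_diff (List.ofFn w) (List.ofFn w') (by simp) hne
    rw [List.length_ofFn] at h4
    refine ⟨k, h4, ?_⟩
    rw [hΦ]
    rw [f1_iter_yw hN k _ (by rw [List.length_ofFn]; exact h4.le),
      f1_iter_yw hN k _ (by rw [List.length_ofFn]; exact h4.le), h1, h2, Real.dist_eq]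
    exact yw_sep h3 t t'
  have hinj : Function.Injective Φ := by
    intro w w' hww
    by_contra hne
    obtain ⟨k, _, hk⟩ := main w w' hne
    rw [hww, dist_self] at hk
    exact absurd (hεpos.trans_le hk) (lt_irrefl 0)
  set S : Finset ℝ := Finset.image Φ Finset.univ with hS
  have hcard : S.card = N ^ m := by
    rw [hS, Finset.card_image_of_injective _ hinj, Finset.card_univ]
    simp
  have hnet : IsDynNetIn f1 (Icc (0:ℝ) 1) U m (S : Set ℝ) := by
    constructor
    · intro u hu
      obtain ⟨w, _, rfl⟩ := Finset.mem_image.1 (Finset.mem_coe.1 hu)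
      obtain ⟨hy1, hy2⟩ := yw_mem (N := N) (List.ofFn w)
      have hv : (0:ℝ) < 2^N := by positivity
      refine ⟨le_trans (by positivity) hy1.le, hy2.trans ?_⟩
      rw [mul_inv_le_iff₀ hv, one_mul]
      exact two_le_pow_real hN
    · intro u hu v hv huv
      obtain ⟨w, _, rfl⟩ := Finset.mem_image.1 (Finset.mem_coe.1 hu)
      obtain ⟨w', _, rfl⟩ := Finset.mem_image.1 (Finset.mem_coe.1 hv)
      have hww : w ≠ w' := fun h => huv (by rw [h])
      obtain ⟨k, hk, hsep⟩ := main w w' hww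
      apply Set.disjoint_left.2
      intro z hz1 hz2
      simp only [UniformSpace.ball, Set.mem_preimage, mem_dynEntourage] at hz1 hz2
      have d1 := hz1 k hk
      have d2 := hz2 k hk
      rw [hU, Set.mem_setOf_eq] at d1 d2
      have : dist (f1^[k] (Φ w)) (f1^[k] (Φ w')) < 2 * δ := by
        calc dist (f1^[k] (Φ w)) (f1^[k] (Φ w'))
            ≤ dist (f1^[k] (Φ w)) (f1^[k] z) + dist (f1^[k] z) (f1^[k] (Φ w')) := dist_triangle _ _ _
        _ < δ + δ := by rw [dist_comm (f1^[k] z)]; exact add_lt_add d1 d2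
        _ = 2 * δ := by ring
      exact absurd (hsep.trans_lt (this.trans_le hδ2)) (lt_irrefl ε)
  have := hnet.card_le_netMaxcard
  rw [hcard] at this
  exact_mod_cast this

open Dynamics ENNReal Filter in
lemma coverEntropy_f1_top : Dynamics.coverEntropy f1 (Icc (0:ℝ) 1) = ⊤ := by
  rw [EReal.eq_top_iff_forall_lt]
  intro r
  obtain ⟨N, hN1, hNr⟩ : ∃ N : ℕ, 1 ≤ N ∧ r < Real.log N := by
    obtain ⟨N, hN⟩ := exists_nat_gt (max 1 (Real.exp r))
    have hN1 : (1:ℝ) < N := (le_max_left 1 (Real.exp r)).trans_lt hN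
    refine ⟨N, by exact_mod_cast hN1.le, ?_⟩
    calc r = Real.log (Real.exp r) := (Real.log_exp r).symm
    _ < Real.log N := Real.log_lt_log (Real.exp_pos r) ((le_max_right _ _).trans_lt hN)
  set δ : ℝ := ((2 * N + 1 : ℝ) * 2^N)⁻¹ / 2 with hδdef
  have hδpos : 0 < δ := by positivity
  have hδ2 : 2 * δ ≤ ((2 * N + 1 : ℝ) * 2^N)⁻¹ := by rw [hδdef]; linarith
  set U : Set (ℝ × ℝ) := {p : ℝ × ℝ | dist p.1 p.2 < δ} with hUdef
  have hUuni : U ∈ uniformity ℝ := Metric.dist_mem_uniformity hδpos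
  have key : (Real.log N : EReal) ≤ Dynamics.coverEntropy f1 (Icc (0:ℝ) 1) := by
    refine le_trans ?_ ((netEntropyEntourage_le_coverEntropyEntourage f1 (Icc (0:ℝ) 1)).trans
      (coverEntropyEntourage_le_coverEntropy f1 (Icc (0:ℝ) 1) hUuni))
    apply le_limsup_of_frequently_le'
    apply Filter.Eventually.frequently
    filter_upwards [Filter.eventually_ge_atTop 1] with m hm
    have hcard := net_card_le (N := N) (m := m) hN1 hδpos hδ2
    have h1 : ((N : ℝ≥0∞)) ^ m ≤ ((netMaxcard f1 (Icc (0:ℝ) 1) U m : ℕ∞) : ℝ≥0∞) := by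
      calc ((N : ℝ≥0∞)) ^ m = (((N : ℕ∞) ^ m : ℕ∞) : ℝ≥0∞) := by
            rw [ENat.toENNReal_pow]; norm_cast
      _ ≤ _ := ENat.toENNReal_mono hcard
    have h2 : (m : EReal) * (Real.log N : EReal) ≤ log (netMaxcard f1 (Icc (0:ℝ) 1) U m) := by
      have hlogN : log ((N : ℝ≥0∞)) = (Real.log N : EReal) := by
        rw [log_pos_real' (by simp; omega)]
        simp
      calc (m : EReal) * (Real.log N : EReal) = log (((N : ℝ≥0∞)) ^ m) := by
            rw [log_pow, hlogN]
      _ ≤ _ := log_monotone h1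
    rw [EReal.le_div_iff_mul_le (by exact_mod_cast Nat.pos_of_ne_zero (by omega))
      (by exact EReal.natCast_ne_top m)]
    rw [mul_comm]
    exact h2
  exact lt_of_lt_of_le (by exact_mod_cast hNr) key

/-- `f_1 : [0,1] → [0,1]` is continuous and has infinite topological entropy. -/
theorem f1_continuous_and_infinite_entropy :
    Set.MapsTo f1 (Set.Icc (0 : ℝ) 1) (Set.Icc (0 : ℝ) 1) ∧
    ContinuousOn f1 (Set.Icc (0 : ℝ) 1) ∧
    Dynamics.coverEntropy f1 (Set.Icc (0 : ℝ) 1) = ⊤ := by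
  exact ⟨f1_mapsTo, f1_continuousOn, coverEntropy_f1_top⟩
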